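/- arXiv:2001.11249 — 4 statements merged into one kernel-verified Lean document; each statement's English description precedes it below -/
import Mathlib

section
/- For loss variables L^1,...,L^J each taking values in [0,1] with E[L^j] = ℓ̄^j, weights w^1,...,w^J ≥ 0 summing to 1, and portfolio loss L = Σ w^j L^j, the worst-case comonotonic loss vector L*_j = 1{U > 1 - ℓ̄^j} (U uniform on [0,1], with ℓ̄^1 ≤ ... ≤ ℓ̄^J) satisfies E[1 - L* - (κ - L*)^+] ≤ E[1 - L - (κ - L)^+] for every κ ∈ [0,1], where L* = Σ w^j L*_j. -/
/-!
The senior payoff is `1 - κ - s + min κ s` in the portfolio loss `s`. With tail weights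
`T i = ∑ j ≥ i, w j`, the coefficients `c i = min κ (T i) - min κ (T (i + 1))` satisfy
`0 ≤ c i ≤ w i` and `∑ c i ≤ κ`, so `∑ c i * x i ≤ min κ (∑ w i * x i)` for every `x ∈ [0,1]^J`,
with equality when `x` is the indicator of an upper set. Since `ℓ` is monotone, the worst-case
vector `L*` is such an indicator at every `ω`; integrating, the linear minorant has the same mean
`∑ c i * ℓ i` under `L*` and under `L`.
-/

open MeasureTheory Finset

section Layer

variable {ι : Type*} [LinearOrder ι] [LocallyFiniteOrderTop ι] (κ : ℝ) (w : ι → ℝ)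

noncomputable def layerWeight (i : ι) : ℝ :=
  min κ (∑ j ∈ Ici i, w j) - min κ (∑ j ∈ Ioi i, w j)

variable {κ w}

lemma layerWeight_nonneg (hw : ∀ i, 0 ≤ w i) (i : ι) : 0 ≤ layerWeight κ w i := by
  rw [layerWeight, ← add_sum_Ioi_eq_sum_Ici]
  exact sub_nonneg.2 (min_le_min_left κ (le_add_of_nonneg_left (hw i)))

lemma layerWeight_le (hw : ∀ i, 0 ≤ w i) (i : ι) : layerWeight κ w i ≤ w i := by
  rw [layerWeight, ← add_sum_Ioi_eq_sum_Ici]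
  rcases le_total κ (∑ j ∈ Ioi i, w j) with h | h
  · rw [min_eq_left h, min_eq_left (by linarith [hw i])]; linarith [hw i]
  · rw [min_eq_right h]; linarith [min_le_right κ (w i + ∑ j ∈ Ioi i, w j)]

lemma sum_layerWeight_of_isUpperSet (hκ : 0 ≤ κ) {s : Finset ι} (hs : IsUpperSet (s : Set ι)) :
    ∑ i ∈ s, layerWeight κ w i = min κ (∑ i ∈ s, w i) := by
  classical
  induction s using Finset.induction_on_min with
  | empty => simp [min_eq_right hκ]
  | insert a s ha ih =>
    have ha' : a ∉ s := fun h => lt_irrefl a (ha a h)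
    have hsa : s = Ioi a := by
      ext x
      refine ⟨fun hx => mem_Ioi.2 (ha x hx), fun hx => ?_⟩
      have := hs (mem_Ioi.1 hx).le (by simp : a ∈ (insert a s : Finset ι))
      exact (mem_insert.1 this).resolve_left (mem_Ioi.1 hx).ne'
    have hs' : IsUpperSet (s : Set ι) := fun x y hxy hx =>
      (mem_insert.1 (hs hxy (mem_insert_of_mem hx))).resolve_left ((ha x hx).trans_le hxy).ne'
    rw [sum_insert ha', sum_insert ha', ih hs', hsa, layerWeight, add_sum_Ioi_eq_sum_Ici]
    ring

variable [Fintype ι]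

lemma sum_layerWeight_mul_le_min (hκ : 0 ≤ κ) (hw : ∀ i, 0 ≤ w i) {x : ι → ℝ}
    (hx : ∀ i, x i ∈ Set.Icc 0 1) :
    ∑ i, layerWeight κ w i * x i ≤ min κ (∑ i, w i * x i) := by
  refine le_min ?_ ?_
  · calc ∑ i, layerWeight κ w i * x i ≤ ∑ i, layerWeight κ w i :=
          sum_le_sum fun i _ => mul_le_of_le_one_right (layerWeight_nonneg hw i) (hx i).2
      _ = min κ (∑ i, w i) :=
          sum_layerWeight_of_isUpperSet hκ (by rw [coe_univ]; exact isUpperSet_univ)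
      _ ≤ κ := min_le_left _ _
  · exact sum_le_sum fun i _ => mul_le_mul_of_nonneg_right (layerWeight_le hw i) (hx i).1

lemma sum_layerWeight_mul_boole (hκ : 0 ≤ κ) {p : ι → Prop} [DecidablePred p]
    (hp : Monotone p) :
    ∑ i, layerWeight κ w i * (if p i then 1 else 0) =
      min κ (∑ i, w i * (if p i then 1 else 0)) := by
  simp only [mul_boole, ← sum_filter]
  exact sum_layerWeight_of_isUpperSet hκ fun a b hab ha => by
    simpa using hp hab (by simpa using ha)

end Layer

section Probability

variable {Ω : Type*} [MeasurableSpace Ω] {μ : Measure Ω} [IsProbabilityMeasure μ]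

lemma integrable_of_mem_Icc {f : Ω → ℝ} (hf : Measurable f) (h01 : ∀ ω, f ω ∈ Set.Icc 0 1) :
    Integrable f μ :=
  .of_bound hf.aestronglyMeasurable 1 (ae_of_all _ fun ω => by
    rw [Real.norm_eq_abs, abs_le]; exact ⟨by linarith [(h01 ω).1], (h01 ω).2⟩)

lemma integral_mem_Icc_of_mem_Icc {f : Ω → ℝ} (hf : Measurable f) (h01 : ∀ ω, f ω ∈ Set.Icc 0 1) :
    ∫ ω, f ω ∂μ ∈ Set.Icc (0 : ℝ) 1 :=
  (convex_Icc 0 1).integral_mem isClosed_Icc (ae_of_all _ h01) (integrable_of_mem_Icc hf h01)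

lemma integral_const_add_sum_mul {ι : Type*} [Fintype ι] {Y : ι → Ω → ℝ}
    (hY : ∀ i, Integrable (Y i) μ) (a : ℝ) (b : ι → ℝ) :
    ∫ ω, (a + ∑ i, b i * Y i ω) ∂μ = a + ∑ i, b i * ∫ ω, Y i ω ∂μ := by
  rw [integral_add (integrable_const a) (integrable_finsetSum _ fun i _ => (hY i).const_mul _),
    integral_const, integral_finsetSum _ fun i _ => (hY i).const_mul _]
  simp [integral_const_mul]

lemma integral_boole_lt_of_uniform {U : Ω → ℝ} (hU : Measurable U)
    (hUnif : ∀ c ∈ Set.Icc (0:ℝ) 1, μ {ω | U ω ≤ c} = ENNReal.ofReal c) {c : ℝ}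
    (hc : c ∈ Set.Icc (0:ℝ) 1) :
    ∫ ω, (if c < U ω then (1:ℝ) else 0) ∂μ = 1 - c := by
  have hset : {ω | c < U ω} = {ω | U ω ≤ c}ᶜ := by ext; simp
  have hind : (fun ω => if c < U ω then (1:ℝ) else 0) = {ω | c < U ω}.indicator 1 := by
    ext ω; simp [Set.indicator_apply]
  rw [hind, integral_indicator_one (measurableSet_lt measurable_const hU), hset,
    measureReal_compl (measurableSet_le hU measurable_const), probReal_univ, measureReal_def,
    hUnif c hc, ENNReal.toReal_ofReal hc.1]

end Probability

theorem worst_case_minimizes_ESB_price_general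
    {Ω : Type*} [MeasurableSpace Ω] (μ : Measure Ω) [IsProbabilityMeasure μ]
    {J : ℕ} (L : Fin J → Ω → ℝ) (ℓ : Fin J → ℝ) (w : Fin J → ℝ)
    (hLmeas : ∀ j, Measurable (L j))
    (hL01 : ∀ j ω, L j ω ∈ Set.Icc (0:ℝ) 1)
    (hmean : ∀ j, ∫ ω, L j ω ∂μ = ℓ j)
    (hℓmono : Monotone ℓ)
    (hw : ∀ j, 0 ≤ w j)
    (U : Ω → ℝ) (hU : Measurable U)
    (hUnif : ∀ c ∈ Set.Icc (0:ℝ) 1, μ {ω | U ω ≤ c} = ENNReal.ofReal c)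
    (κ : ℝ) (hκ : κ ∈ Set.Icc (0:ℝ) 1) :
    (∫ ω, (1 - (∑ j, w j * (if 1 - ℓ j < U ω then (1:ℝ) else 0))
        - max (κ - ∑ j, w j * (if 1 - ℓ j < U ω then (1:ℝ) else 0)) 0) ∂μ)
      ≤ ∫ ω, (1 - (∑ j, w j * L j ω) - max (κ - ∑ j, w j * L j ω) 0) ∂μ := by
  set c := layerWeight κ w
  have hmax (s : ℝ) : max (κ - s) 0 = κ - min κ s := by
    rw [← max_sub_sub_left, sub_self, max_comm]
  have hsplit (x : Fin J → ℝ) : ∑ j, (c j - w j) * x j = ∑ j, c j * x j - ∑ j, w j * x j := by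
    simp only [sub_mul, sum_sub_distrib]
  have hLint j : Integrable (L j) μ := integrable_of_mem_Icc (hLmeas j) (hL01 j)
  have hXint j : Integrable (fun ω => if 1 - ℓ j < U ω then (1:ℝ) else 0) μ :=
    integrable_of_mem_Icc
      (measurable_const.ite (measurableSet_lt measurable_const hU) measurable_const)
      fun ω => by split_ifs <;> simp
  have hXmean j : ∫ ω, (if 1 - ℓ j < U ω then (1:ℝ) else 0) ∂μ = ℓ j := by
    have hℓ := hmean j ▸ integral_mem_Icc_of_mem_Icc (μ := μ) (hLmeas j) (hL01 j)
    rw [integral_boole_lt_of_uniform hU hUnif ⟨by linarith [hℓ.2], by linarith [hℓ.1]⟩]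
    ring
  calc _ = ∫ ω, (1 - κ + ∑ j, (c j - w j) * (if 1 - ℓ j < U ω then (1:ℝ) else 0)) ∂μ := by
        refine integral_congr_ae (ae_of_all _ fun ω => ?_)
        have hmono : Monotone fun j => 1 - ℓ j < U ω := fun i j hij h =>
          lt_of_le_of_lt (by linarith [hℓmono hij]) h
        simp only [hmax, hsplit, sum_layerWeight_mul_boole hκ.1 hmono, c]
        ring
    _ = ∫ ω, (1 - κ + ∑ j, (c j - w j) * L j ω) ∂μ := by
        rw [integral_const_add_sum_mul hXint, integral_const_add_sum_mul hLint]
        simp only [hXmean, hmean]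
    _ ≤ _ := by
        refine integral_mono (by fun_prop) (by fun_prop) fun ω => ?_
        simp only [hmax, hsplit]
        linarith [sum_layerWeight_mul_le_min hκ.1 hw (hL01 · ω)]

theorem worst_case_minimizes_ESB_price
    {Ω : Type*} [MeasurableSpace Ω] (μ : Measure Ω) [IsProbabilityMeasure μ]
    {J : ℕ} (L : Fin J → Ω → ℝ) (ℓ : Fin J → ℝ) (w : Fin J → ℝ)
    (hLmeas : ∀ j, Measurable (L j))
    (hL01 : ∀ j ω, L j ω ∈ Set.Icc (0:ℝ) 1)
    (hmean : ∀ j, ∫ ω, L j ω ∂μ = ℓ j)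
    (hℓmono : Monotone ℓ)
    (hw : ∀ j, 0 ≤ w j) (hwsum : ∑ j, w j = 1)
    (U : Ω → ℝ) (hU : Measurable U)
    (hUnif : ∀ c ∈ Set.Icc (0:ℝ) 1, μ {ω | U ω ≤ c} = ENNReal.ofReal c)
    (κ : ℝ) (hκ : κ ∈ Set.Icc (0:ℝ) 1) :
    (∫ ω, (1 - (∑ j, w j * (if 1 - ℓ j < U ω then (1:ℝ) else 0))
        - max (κ - ∑ j, w j * (if 1 - ℓ j < U ω then (1:ℝ) else 0)) 0) ∂μ)
      ≤ ∫ ω, (1 - (∑ j, w j * L j ω) - max (κ - ∑ j, w j * L j ω) 0) ∂μ :=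
  worst_case_minimizes_ESB_price_general μ L ℓ w hLmeas hL01 hmean hℓmono hw U hU hUnif κ hκ
end

section
/- Let L be a random variable with values in [0,1] and E[L] = ℓ̄. Then for every α ∈ [0,1), the expected shortfall satisfies ES_α(L) ≤ (1/(1-α)) · min(1-α, ℓ̄), and this bound is attained by the Bernoulli variable L* = 1{U > 1 - ℓ̄} with U uniform on [0,1]. -/
open MeasureTheory

/-- The `u`-quantile of a random variable `Z` under `μ`. -/
noncomputable def quantile {Ω : Type*} [MeasurableSpace Ω]
    (μ : Measure Ω) (Z : Ω → ℝ) (u : ℝ) : ℝ :=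
  sInf {x : ℝ | ENNReal.ofReal u ≤ μ {ω | Z ω ≤ x}}

/-- Expected shortfall at level `α`: `(1/(1-α)) ∫_α^1 q_u du`. -/
noncomputable def ES {Ω : Type*} [MeasurableSpace Ω]
    (μ : Measure Ω) (Z : Ω → ℝ) (α : ℝ) : ℝ :=
  (1 - α)⁻¹ * ∫ u in Set.Ioo α 1, quantile μ Z u

/-!
The quantile function `q` of a `[0, 1]`-valued `L` takes values in `[0, 1]` on `(0, 1]`, so
`∫_α^1 q ≤ 1 - α`. For every `t`, the set `{u ∈ (0, 1] | t < q u}` lies in `(F t, 1]`, where `F`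
is the distribution function of `L`, an interval of length `P(t < L)`; so the layer-cake formula
gives `∫_α^1 q ≤ ∫_0^1 q ≤ E[L] = ℓ`. The variable `1{U > 1 - ℓ}` vanishes with probability
`1 - ℓ`, so its quantile function is the indicator of `(1 - ℓ, 1]`, whose integral over `(α, 1)`
is `1 - max α (1 - ℓ) = min (1 - α) ℓ`.
-/

open Set

section Quantile

variable {Ω : Type*} [MeasurableSpace Ω] {μ : Measure Ω} {Z : Ω → ℝ} {a b t u x y : ℝ}

lemma le_of_ofReal_le_measure_setOf_le (ha : ∀ ω, a ≤ Z ω) (hu : 0 < u)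
    (hx : ENNReal.ofReal u ≤ μ {ω | Z ω ≤ x}) : a ≤ x := by
  by_contra! hxa
  have hempty : {ω | Z ω ≤ x} = ∅ :=
    eq_empty_of_forall_notMem fun ω hω => (hxa.trans_le (ha ω)).not_ge hω
  rw [hempty, measure_empty, nonpos_iff_eq_zero, ENNReal.ofReal_eq_zero] at hx
  exact hx.not_gt hu

lemma quantile_le (ha : ∀ ω, a ≤ Z ω) (hu : 0 < u)
    (hx : ENNReal.ofReal u ≤ μ {ω | Z ω ≤ x}) : quantile μ Z u ≤ x :=
  csInf_le ⟨a, fun _ hy => le_of_ofReal_le_measure_setOf_le ha hu hy⟩ hx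

lemma measure_setOf_le_lt_of_lt_quantile (ha : ∀ ω, a ≤ Z ω) (hu : 0 < u)
    (ht : t < quantile μ Z u) : μ {ω | Z ω ≤ t} < ENNReal.ofReal u :=
  lt_of_not_ge fun h => ht.not_ge (quantile_le ha hu h)

variable [IsProbabilityMeasure μ]

lemma ofReal_le_measure_setOf_le_of_le (hb : ∀ ω, Z ω ≤ b) (hu : u ≤ 1) :
    ENNReal.ofReal u ≤ μ {ω | Z ω ≤ b} := by
  simpa [hb] using ENNReal.ofReal_le_one.mpr hu

lemma le_quantile (hb : ∀ ω, Z ω ≤ b) (hu : u ≤ 1)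
    (h : ∀ x, ENNReal.ofReal u ≤ μ {ω | Z ω ≤ x} → y ≤ x) : y ≤ quantile μ Z u :=
  le_csInf ⟨b, ofReal_le_measure_setOf_le_of_le hb hu⟩ h

lemma quantile_mem_Icc (ha : ∀ ω, a ≤ Z ω) (hb : ∀ ω, Z ω ≤ b) (hu : u ∈ Ioc 0 1) :
    quantile μ Z u ∈ Icc a b :=
  ⟨le_quantile hb hu.2 fun _ => le_of_ofReal_le_measure_setOf_le ha hu.1,
    quantile_le ha hu.1 (ofReal_le_measure_setOf_le_of_le hb hu.2)⟩

lemma monotoneOn_quantile (ha : ∀ ω, a ≤ Z ω) (hb : ∀ ω, Z ω ≤ b) :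
    MonotoneOn (quantile μ Z) (Ioc 0 1) := fun _ hu _ hv huv =>
  le_quantile hb hv.2 fun _ hx => quantile_le ha hu.1 ((ENNReal.ofReal_le_ofReal huv).trans hx)

lemma volume_setOf_lt_quantile_le (hZ : Measurable Z) (ha : ∀ ω, a ≤ Z ω) :
    volume.restrict (Ioc 0 1) {u | t < quantile μ Z u} ≤ μ {ω | t < Z ω} := by
  have hsub : {u | t < quantile μ Z u} ∩ Ioc 0 1 ⊆ Ioc (μ {ω | Z ω ≤ t}).toReal 1 :=
    fun u ⟨htu, hu⟩ => ⟨(ENNReal.lt_ofReal_iff_toReal_lt (measure_ne_top μ _)).mp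
      (measure_setOf_le_lt_of_lt_quantile ha hu.1 htu), hu.2⟩
  have hcompl : μ {ω | t < Z ω} = ENNReal.ofReal (1 - (μ {ω | Z ω ≤ t}).toReal) := by
    rw [ENNReal.ofReal_sub _ ENNReal.toReal_nonneg, ENNReal.ofReal_one,
      ENNReal.ofReal_toReal (measure_ne_top μ _),
      ← prob_compl_eq_one_sub (measurableSet_le hZ measurable_const)]
    congr 1
    ext ω
    simp
  calc volume.restrict (Ioc 0 1) {u | t < quantile μ Z u}
      = volume ({u | t < quantile μ Z u} ∩ Ioc 0 1) :=
        Measure.restrict_apply' measurableSet_Ioc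
    _ ≤ volume (Ioc (μ {ω | Z ω ≤ t}).toReal 1) := measure_mono hsub
    _ = μ {ω | t < Z ω} := by rw [Real.volume_Ioc, hcompl]

lemma lintegral_quantile_le_lintegral (hZ : Measurable Z) (h0 : ∀ ω, 0 ≤ Z ω)
    (hb : ∀ ω, Z ω ≤ b) :
    ∫⁻ u in Ioc 0 1, ENNReal.ofReal (quantile μ Z u) ≤ ∫⁻ ω, ENNReal.ofReal (Z ω) ∂μ := by
  have hq0 : 0 ≤ᵐ[volume.restrict (Ioc 0 1)] quantile μ Z :=
    ae_restrict_of_forall_mem measurableSet_Ioc fun _ hu => (quantile_mem_Icc h0 hb hu).1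
  have hqm : AEMeasurable (quantile μ Z) (volume.restrict (Ioc 0 1)) :=
    aemeasurable_restrict_of_monotoneOn measurableSet_Ioc (monotoneOn_quantile h0 hb)
  rw [lintegral_eq_lintegral_meas_lt _ hq0 hqm,
    lintegral_eq_lintegral_meas_lt μ (.of_forall h0) hZ.aemeasurable]
  exact lintegral_mono fun _ => volume_setOf_lt_quantile_le hZ h0

lemma setIntegral_quantile_le_integral {s : Set ℝ} (hZ : Measurable Z) (h0 : ∀ ω, 0 ≤ Z ω)
    (hb : ∀ ω, Z ω ≤ b) (hs : MeasurableSet s) (hs1 : s ⊆ Ioc 0 1) :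
    ∫ u in s, quantile μ Z u ≤ ∫ ω, Z ω ∂μ := by
  have hq0 : 0 ≤ᵐ[volume.restrict s] quantile μ Z :=
    ae_restrict_of_forall_mem hs fun _ hu => (quantile_mem_Icc h0 hb (hs1 hu)).1
  have hqm : AEMeasurable (quantile μ Z) (volume.restrict s) :=
    aemeasurable_restrict_of_monotoneOn hs ((monotoneOn_quantile h0 hb).mono hs1)
  have hZint : Integrable Z μ :=
    .of_mem_Icc 0 b hZ.aemeasurable (.of_forall fun ω => ⟨h0 ω, hb ω⟩)
  rw [integral_eq_lintegral_of_nonneg_ae hq0 hqm.aestronglyMeasurable,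
    integral_eq_lintegral_of_nonneg_ae (.of_forall h0) hZ.aestronglyMeasurable]
  exact ENNReal.toReal_mono hZint.lintegral_lt_top.ne
    ((lintegral_mono_set hs1).trans (lintegral_quantile_le_lintegral hZ h0 hb))

lemma setIntegral_quantile_le_mul_volume {s : Set ℝ} (h0 : ∀ ω, 0 ≤ Z ω) (hb : ∀ ω, Z ω ≤ b)
    (hs1 : s ⊆ Ioc 0 1) :
    ∫ u in s, quantile μ Z u ≤ b * volume.real s := by
  refine (Real.le_norm_self _).trans (norm_setIntegral_le_of_norm_le_const ?_ fun u hu => ?_)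
  · exact (measure_mono hs1).trans_lt measure_Ioc_lt_top
  · obtain ⟨hq0, hqb⟩ := quantile_mem_Icc (μ := μ) h0 hb (hs1 hu)
    rwa [Real.norm_of_nonneg hq0]

theorem ES_le_min (hZ : Measurable Z) (hZ01 : ∀ ω, Z ω ∈ Icc (0 : ℝ) 1) {α : ℝ}
    (hα : α ∈ Ico (0 : ℝ) 1) :
    ES μ Z α ≤ (1 - α)⁻¹ * min (1 - α) (∫ ω, Z ω ∂μ) := by
  have hs1 : Ioo α 1 ⊆ Ioc 0 1 := fun u hu => ⟨hα.1.trans_lt hu.1, hu.2.le⟩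
  have h0 : ∀ ω, 0 ≤ Z ω := fun ω => (hZ01 ω).1
  have h1 : ∀ ω, Z ω ≤ 1 := fun ω => (hZ01 ω).2
  refine mul_le_mul_of_nonneg_left (le_min ?_ ?_) (inv_nonneg.mpr (sub_nonneg.mpr hα.2.le))
  · simpa [Real.volume_real_Ioo_of_le hα.2.le] using
      setIntegral_quantile_le_mul_volume (μ := μ) h0 h1 hs1
  · exact setIntegral_quantile_le_integral hZ h0 h1 measurableSet_Ioo hs1

end Quantile

section Indicator

variable {Ω : Type*} [MeasurableSpace Ω] {μ : Measure Ω} [IsProbabilityMeasure μ] {A : Set Ω}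
  {p u : ℝ}

lemma quantile_indicator_one (hA : μ Aᶜ = ENNReal.ofReal p) (hu : u ∈ Ioc 0 1) :
    quantile μ (A.indicator 1) u = (Ioi p).indicator 1 u := by
  have h0 : ∀ ω, 0 ≤ A.indicator (1 : Ω → ℝ) ω :=
    fun _ => indicator_nonneg (fun _ _ => zero_le_one) _
  have h1 : ∀ ω, A.indicator (1 : Ω → ℝ) ω ≤ 1 :=
    fun _ => indicator_le_self' (fun _ _ => zero_le_one) _
  obtain ⟨hq0, hq1⟩ := quantile_mem_Icc (μ := μ) h0 h1 hu
  by_cases hpu : p < u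
  · rw [indicator_of_mem (show u ∈ Ioi p from hpu), Pi.one_apply]
    refine hq1.antisymm (le_quantile h1 hu.2 fun x hx => ?_)
    by_contra! hx1
    have hsub : {ω | A.indicator (1 : Ω → ℝ) ω ≤ x} ⊆ Aᶜ := fun ω hω hωA => by
      simp [indicator_of_mem hωA, hx1.not_ge] at hω
    exact ((ENNReal.ofReal_lt_ofReal_iff hu.1).mpr hpu).not_ge
      (hx.trans ((measure_mono hsub).trans_eq hA))
  · rw [indicator_of_notMem (show u ∉ Ioi p from hpu)]
    refine (quantile_le h0 hu.1 ?_).antisymm hq0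
    have hsup : Aᶜ ⊆ {ω | A.indicator (1 : Ω → ℝ) ω ≤ 0} := fun ω hωA => by
      simp [indicator_of_notMem hωA]
    exact (ENNReal.ofReal_le_ofReal (not_lt.mp hpu)).trans
      (hA.symm.trans_le (measure_mono hsup))

theorem ES_indicator_one (hA : μ Aᶜ = ENNReal.ofReal p) (hp : p ≤ 1) {α : ℝ}
    (hα : α ∈ Ico (0 : ℝ) 1) :
    ES μ (A.indicator 1) α = (1 - α)⁻¹ * (1 - max α p) := by
  have hq : EqOn (quantile μ (A.indicator 1)) ((Ioi p).indicator 1) (Ioo α 1) :=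
    fun u hu => quantile_indicator_one hA ⟨hα.1.trans_lt hu.1, hu.2.le⟩
  rw [ES, setIntegral_congr_fun measurableSet_Ioo hq, setIntegral_indicator measurableSet_Ioi,
    Ioo_inter_Ioi, Pi.one_def, setIntegral_const,
    Real.volume_real_Ioo_of_le (max_le hα.2.le hp), smul_eq_mul, mul_one]

end Indicator

theorem ES_bound_and_attainment_general
    {Ω : Type*} [MeasurableSpace Ω] (μ : Measure Ω) [IsProbabilityMeasure μ]
    (L : Ω → ℝ) (hL : Measurable L) (hL01 : ∀ ω, L ω ∈ Set.Icc (0:ℝ) 1)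
    (ℓ : ℝ) (hmean : ∫ ω, L ω ∂μ = ℓ)
    (U : Ω → ℝ)
    (hUnif : ∀ c ∈ Set.Icc (0:ℝ) 1, μ {ω | U ω ≤ c} = ENNReal.ofReal c)
    (α : ℝ) (hα : α ∈ Set.Ico (0:ℝ) 1) :
    ES μ L α ≤ (1 - α)⁻¹ * min (1 - α) ℓ ∧
      ES μ (fun ω => if 1 - ℓ < U ω then (1:ℝ) else 0) α
        = (1 - α)⁻¹ * min (1 - α) ℓ := by
  have hℓ0 : 0 ≤ ℓ := hmean ▸ integral_nonneg fun ω => (hL01 ω).1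
  have hℓ1 : ℓ ≤ 1 := hmean ▸ (integral_mono_of_nonneg (.of_forall fun ω => (hL01 ω).1)
    (integrable_const 1) (.of_forall fun ω => (hL01 ω).2)).trans_eq (by simp)
  refine ⟨hmean ▸ ES_le_min hL hL01 hα, ?_⟩
  have hLstar :
      (fun ω => if 1 - ℓ < U ω then (1:ℝ) else 0) = {ω | 1 - ℓ < U ω}.indicator 1 := by
    ext ω
    simp [indicator_apply]
  have hA : μ {ω | 1 - ℓ < U ω}ᶜ = ENNReal.ofReal (1 - ℓ) := by
    simpa [compl_ofPred] using hUnif (1 - ℓ) ⟨by linarith, by linarith⟩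
  rw [hLstar, ES_indicator_one hA (by linarith) hα, ← min_sub_sub_left, sub_sub_cancel]

theorem ES_bound_and_attainment
    {Ω : Type*} [MeasurableSpace Ω] (μ : Measure Ω) [IsProbabilityMeasure μ]
    (L : Ω → ℝ) (hL : Measurable L) (hL01 : ∀ ω, L ω ∈ Set.Icc (0:ℝ) 1)
    (ℓ : ℝ) (hmean : ∫ ω, L ω ∂μ = ℓ)
    (U : Ω → ℝ) (hU : Measurable U)
    (hUnif : ∀ c ∈ Set.Icc (0:ℝ) 1, μ {ω | U ω ≤ c} = ENNReal.ofReal c)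
    (α : ℝ) (hα : α ∈ Set.Ico (0:ℝ) 1) :
    ES μ L α ≤ (1 - α)⁻¹ * min (1 - α) ℓ ∧
      ES μ (fun ω => if 1 - ℓ < U ω then (1:ℝ) else 0) α
        = (1 - α)⁻¹ * min (1 - α) ℓ :=
  ES_bound_and_attainment_general μ L hL hL01 ℓ hmean U hUnif α hα
end

section
/- Given the equivalence between increasing convex order via stop-loss transforms and via expected shortfall: for integrable random variables S and S* with E[S] = E[S*], the condition E[(S - κ)^+] ≤ E[(S* - κ)^+] for all κ ∈ ℝ holds if and only if ES_α(S) ≤ ES_α(S*) for all α ∈ [0,1). -/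
/-!
The quantile transform `u ↦ q_u(Z)` pushes Lebesgue measure on `(0, 1)` forward to the law of `Z`,
so `E[(Z - κ)^+] = ∫_0^1 (q_u - κ)^+ du ≥ ∫_α^1 q_u du - (1 - α) κ`, with equality when `q` crosses
the level `κ` at `α` (the Rockafellar–Uryasev formula for `ES_α`). For `⇒` take `κ = q_α(S*)`, for
`⇐` take `α` where `q(S)` crosses `κ`; at `α = 0` both expected shortfalls are the means.
-/

open MeasureTheory

open Set Filter Topology ProbabilityTheory

lemma setIntegral_Ioo_sub_const {f : ℝ → ℝ} {a b : ℝ} (hab : a ≤ b)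
    (hf : IntegrableOn f (Ioo a b)) (κ : ℝ) :
    ∫ x in Ioo a b, (f x - κ) = (∫ x in Ioo a b, f x) - (b - a) * κ := by
  rw [integral_sub hf (integrableOn_const (by simp)), setIntegral_const, measureReal_def,
    Real.volume_Ioo, ENNReal.toReal_ofReal (sub_nonneg.2 hab), smul_eq_mul]

lemma setIntegral_le_setIntegral_max_zero {α : Type*} [MeasurableSpace α] {μ : Measure α}
    {f : α → ℝ} {s t : Set α} (hf : IntegrableOn f s μ) (hts : t ⊆ s) :
    ∫ x in t, f x ∂μ ≤ ∫ x in s, max (f x) 0 ∂μ :=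
  calc ∫ x in t, f x ∂μ ≤ ∫ x in t, max (f x) 0 ∂μ :=
        integral_mono (hf.mono_set hts) (hf.mono_set hts).pos_part fun _ => le_max_left _ _
    _ ≤ ∫ x in s, max (f x) 0 ∂μ :=
        setIntegral_mono_set hf.pos_part (Eventually.of_forall fun _ => le_max_right _ _)
          hts.eventuallyLE

lemma setIntegral_Ioo_eq_setIntegral_max_zero {f : ℝ → ℝ} {a b c : ℝ} (hab : a ≤ b)
    (hbc : b ≤ c) (hf : IntegrableOn f (Ioo a c)) (hneg : ∀ x ∈ Ioo a b, f x ≤ 0)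
    (hpos : ∀ x ∈ Ioo b c, 0 ≤ f x) :
    ∫ x in Ioo b c, f x = ∫ x in Ioo a c, max (f x) 0 := by
  have hf' : IntegrableOn (fun x => max (f x) 0) (Ioc a c) := by
    rw [integrableOn_Ioc_iff_integrableOn_Ioo]
    exact hf.pos_part
  rw [← integral_Ioc_eq_integral_Ioo (x := a), ← Ioc_union_Ioc_eq_Ioc hab hbc,
    setIntegral_union (Ioc_disjoint_Ioc_of_le le_rfl) measurableSet_Ioc
      (hf'.mono_set (Ioc_subset_Ioc_right hbc)) (hf'.mono_set (Ioc_subset_Ioc_left hab)),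
    integral_Ioc_eq_integral_Ioo, integral_Ioc_eq_integral_Ioo,
    setIntegral_congr_fun measurableSet_Ioo fun x hx => max_eq_right (hneg x hx),
    setIntegral_congr_fun measurableSet_Ioo fun x hx => max_eq_left (hpos x hx)]
  simp

lemma volume_Iic_inter_Ioo_zero_one {t : ℝ} (h1 : t ≤ 1) :
    volume (Iic t ∩ Ioo 0 1) = ENNReal.ofReal t := by
  rw [measure_congr (EventuallyEq.rfl.inter Ioo_ae_eq_Ioc), Iic_inter_Ioc_of_le h1,
    Real.volume_Ioc, sub_zero]

lemma MonotoneOn.exists_crossing {f : ℝ → ℝ} {a b : ℝ} (hf : MonotoneOn f (Ioo a b))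
    (hab : a ≤ b) (κ : ℝ) :
    ∃ c ∈ Icc a b, (∀ x ∈ Ioo a c, f x ≤ κ) ∧ ∀ x ∈ Ioo c b, κ ≤ f x := by
  set A := insert a {x | x ∈ Ioo a b ∧ f x ≤ κ}
  have hAb : ∀ x ∈ A, x ≤ b := by rintro x (rfl | ⟨hx, -⟩); exacts [hab, hx.2.le]
  have hA : BddAbove A := ⟨b, hAb⟩
  refine ⟨sSup A, ⟨le_csSup hA (mem_insert a _), csSup_le (insert_nonempty _ _) hAb⟩, ?_, ?_⟩
  · intro x hx
    obtain ⟨y, hyA, hxy⟩ := exists_lt_of_lt_csSup (insert_nonempty _ _) hx.2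
    rcases hyA with rfl | ⟨hy, hyκ⟩
    · exact absurd hx.1 hxy.not_gt
    · exact (hf ⟨hx.1, hxy.trans hy.2⟩ hy hxy.le).trans hyκ
  · intro x hx
    by_contra! hxκ
    exact hx.1.not_ge (le_csSup hA (Or.inr ⟨⟨(le_csSup hA (mem_insert a _)).trans_lt hx.1,
      hx.2⟩, hxκ.le⟩))

lemma StieltjesFunction.sInf_le_iff {F : StieltjesFunction ℝ} {u : ℝ} (hne : ∃ x, u ≤ F x)
    (hlt : ∃ x, F x < u) (x : ℝ) : sInf {y | u ≤ F y} ≤ x ↔ u ≤ F x := by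
  obtain ⟨x₀, hx₀⟩ := hlt
  have hbdd : BddBelow {y | u ≤ F y} :=
    ⟨x₀, fun y hy => le_of_lt (F.mono.reflect_lt (hx₀.trans_le hy))⟩
  refine ⟨fun h => ?_, fun h => csInf_le hbdd h⟩
  refine ge_of_tendsto ((F.right_continuous x).mono Ioi_subset_Ici_self)
    (eventually_nhdsWithin_of_forall fun y hy => ?_)
  obtain ⟨z, hz, hzy⟩ := exists_lt_of_csInf_lt hne (h.trans_lt hy)
  exact le_trans hz (F.mono hzy.le)

section Quantile

variable {Ω : Type*} [MeasurableSpace Ω] {μ : Measure Ω} [IsProbabilityMeasure μ] {Z : Ω → ℝ}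

lemma quantile_eq_sInf_cdf (hZ : Measurable Z) (u : ℝ) :
    quantile μ Z u = sInf {x | u ≤ cdf (μ.map Z) x} := by
  have := Measure.isProbabilityMeasure_map (μ := μ) hZ.aemeasurable
  unfold quantile
  congr with x
  rw [← ENNReal.ofReal_le_ofReal_iff (cdf_nonneg _ x), ofReal_cdf,
    Measure.map_apply hZ measurableSet_Iic]
  rfl

lemma quantile_le_iff (hZ : Measurable Z) {u : ℝ} (hu : u ∈ Ioo 0 1) (x : ℝ) :
    quantile μ Z u ≤ x ↔ u ≤ cdf (μ.map Z) x := by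
  rw [quantile_eq_sInf_cdf hZ]
  exact StieltjesFunction.sInf_le_iff
    (((tendsto_cdf_atTop _).eventually (eventually_gt_nhds hu.2)).exists.imp fun _ => le_of_lt)
    ((tendsto_cdf_atBot _).eventually (eventually_lt_nhds hu.1)).exists x

lemma monotoneOn_quantile_s18 (hZ : Measurable Z) : MonotoneOn (quantile μ Z) (Ioo 0 1) :=
  fun _ hu _ hv huv => (quantile_le_iff hZ hu _).2 <|
    huv.trans ((quantile_le_iff hZ hv _).1 le_rfl)

lemma aemeasurable_quantile (hZ : Measurable Z) :
    AEMeasurable (quantile μ Z) (volume.restrict (Ioo 0 1)) :=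
  aemeasurable_restrict_of_monotoneOn measurableSet_Ioo (monotoneOn_quantile_s18 hZ)

lemma map_quantile (hZ : Measurable Z) :
    (volume.restrict (Ioo 0 1)).map (quantile μ Z) = μ.map Z := by
  have := Measure.isProbabilityMeasure_map (μ := μ) hZ.aemeasurable
  refine Measure.ext_of_Iic _ _ fun x => ?_
  have hpre : quantile μ Z ⁻¹' Iic x ∩ Ioo 0 1 = Iic (cdf (μ.map Z) x) ∩ Ioo 0 1 := by
    ext u
    simp only [mem_inter_iff, mem_preimage, mem_Iic]
    exact and_congr_left fun hu => quantile_le_iff hZ hu x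
  rw [Measure.map_apply_of_aemeasurable (aemeasurable_quantile hZ) measurableSet_Iic,
    Measure.restrict_apply' measurableSet_Ioo, hpre,
    volume_Iic_inter_Ioo_zero_one (cdf_le_one _ x), ofReal_cdf]

lemma setIntegral_comp_quantile (hZ : Measurable Z) {f : ℝ → ℝ} (hf : Measurable f) :
    ∫ u in Ioo 0 1, f (quantile μ Z u) = ∫ ω, f (Z ω) ∂μ := by
  rw [← integral_map (aemeasurable_quantile hZ) hf.aestronglyMeasurable, map_quantile hZ,
    integral_map hZ.aemeasurable hf.aestronglyMeasurable]

lemma integrableOn_quantile (hZ : Measurable Z) (hint : Integrable Z μ) :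
    IntegrableOn (quantile μ Z) (Ioo 0 1) := by
  have h : Integrable id (μ.map Z) := (integrable_map_measure
    aestronglyMeasurable_id hZ.aemeasurable).2 hint
  rw [← map_quantile hZ] at h
  exact (integrable_map_measure aestronglyMeasurable_id (aemeasurable_quantile hZ)).1 h

lemma setIntegral_quantile (hZ : Measurable Z) :
    ∫ u in Ioo 0 1, quantile μ Z u = ∫ ω, Z ω ∂μ :=
  setIntegral_comp_quantile hZ measurable_id

lemma setIntegral_Ioo_quantile_sub_le (hZ : Measurable Z) (hint : Integrable Z μ) {α : ℝ}
    (hα0 : 0 ≤ α) (hα1 : α ≤ 1) (κ : ℝ) :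
    (∫ u in Ioo α 1, quantile μ Z u) - (1 - α) * κ ≤ ∫ ω, max (Z ω - κ) 0 ∂μ := by
  have hq := integrableOn_quantile hZ hint
  rw [← setIntegral_Ioo_sub_const hα1 (hq.mono_set (Ioo_subset_Ioo_left hα0)),
    ← setIntegral_comp_quantile hZ (f := fun x => max (x - κ) 0) (by fun_prop)]
  exact setIntegral_le_setIntegral_max_zero (hq.sub (integrableOn_const (by simp)))
    (Ioo_subset_Ioo_left hα0)

lemma setIntegral_Ioo_quantile_sub_eq (hZ : Measurable Z) (hint : Integrable Z μ) {α κ : ℝ}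
    (hα0 : 0 ≤ α) (hα1 : α ≤ 1) (hbelow : ∀ u ∈ Ioo 0 α, quantile μ Z u ≤ κ)
    (habove : ∀ u ∈ Ioo α 1, κ ≤ quantile μ Z u) :
    (∫ u in Ioo α 1, quantile μ Z u) - (1 - α) * κ = ∫ ω, max (Z ω - κ) 0 ∂μ := by
  have hq := integrableOn_quantile hZ hint
  rw [← setIntegral_Ioo_sub_const hα1 (hq.mono_set (Ioo_subset_Ioo_left hα0)),
    ← setIntegral_comp_quantile hZ (f := fun x => max (x - κ) 0) (by fun_prop)]
  exact setIntegral_Ioo_eq_setIntegral_max_zero hα0 hα1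
    (hq.sub (integrableOn_const (by simp)))
    (fun u hu => sub_nonpos.2 (hbelow u hu)) (fun u hu => sub_nonneg.2 (habove u hu))

end Quantile

lemma ES_le_ES_iff {Ω : Type*} [MeasurableSpace Ω] {μ : Measure Ω} {S S' : Ω → ℝ} {α : ℝ}
    (hα : α < 1) :
    ES μ S α ≤ ES μ S' α ↔
      ∫ u in Ioo α 1, quantile μ S u ≤ ∫ u in Ioo α 1, quantile μ S' u :=
  mul_le_mul_iff_of_pos_left (inv_pos.2 (sub_pos.2 hα))

theorem stop_loss_iff_expected_shortfall
    {Ω : Type*} [MeasurableSpace Ω] (μ : Measure Ω) [IsProbabilityMeasure μ]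
    (S Sstar : Ω → ℝ) (hSmeas : Measurable S) (hSstarmeas : Measurable Sstar)
    (hS : Integrable S μ) (hSstar : Integrable Sstar μ)
    (hmean : ∫ ω, S ω ∂μ = ∫ ω, Sstar ω ∂μ) :
    (∀ κ : ℝ, ∫ ω, max (S ω - κ) 0 ∂μ ≤ ∫ ω, max (Sstar ω - κ) 0 ∂μ) ↔
      (∀ α ∈ Set.Ico (0:ℝ) 1, ES μ S α ≤ ES μ Sstar α) := by
  constructor
  · rintro hSL α ⟨hα0, hα1⟩
    rw [ES_le_ES_iff hα1]
    rcases hα0.eq_or_lt with rfl | hα0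
    · rw [setIntegral_quantile hSmeas, setIntegral_quantile hSstarmeas, hmean]
    set κ := quantile μ Sstar α
    have hα : α ∈ Ioo 0 1 := ⟨hα0, hα1⟩
    have hstar := setIntegral_Ioo_quantile_sub_eq hSstarmeas hSstar hα0.le hα1.le
      (fun u hu => monotoneOn_quantile_s18 hSstarmeas ⟨hu.1, hu.2.trans hα1⟩ hα hu.2.le)
      (fun u hu => monotoneOn_quantile_s18 hSstarmeas hα ⟨hα0.trans hu.1, hu.2⟩ hu.1.le)
    linarith [setIntegral_Ioo_quantile_sub_le hSmeas hS hα0.le hα1.le κ, hSL κ]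
  · intro hES κ
    obtain ⟨α, ⟨hα0, hα1⟩, hbelow, habove⟩ :=
      (monotoneOn_quantile_s18 (μ := μ) hSmeas).exists_crossing zero_le_one κ
    have htail : ∫ u in Ioo α 1, quantile μ S u ≤ ∫ u in Ioo α 1, quantile μ Sstar u := by
      rcases hα1.eq_or_lt with rfl | hα1
      · simp
      · exact (ES_le_ES_iff hα1).1 (hES α ⟨hα0, hα1⟩)
    rw [← setIntegral_Ioo_quantile_sub_eq hSmeas hS hα0 hα1 hbelow habove]
    linarith [setIntegral_Ioo_quantile_sub_le hSstarmeas hSstar hα0 hα1 κ]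
end

section
/- For a one-dimensional CIR-type Riccati equation ∂_t β(t) = -κ β(t) + (σ²/2) β(t)² - a with β(0) = -u, where κ, σ > 0, a ≥ 0, u ≥ 0, the solution β(t) exists for all t ≥ 0 and satisfies β(t) ≤ 0 for all t ≥ 0. -/
/-!
The substitution `β = -w' / (q w)` with `q = σ² / 2` turns the Riccati equation into the linear
equation `w'' = -κ w' + q a w`, `w 0 = 1`, `w' 0 = q u`. Its solution is a combination
`A e^{λ₊ t} + B e^{λ₋ t}` of the exponentials of the characteristic roots `λ₋ ≤ 0 ≤ λ₊`, with
`A ≥ 0`. Since `A e^{λ₊ t}` dominates, both `w` and `w'` stay nonnegative, and `w` positive, for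
`t ≥ 0`; hence `β` is defined for all `t ≥ 0` and is nonpositive there.
-/

open Real

noncomputable def expCombo (A B l₁ l₂ t : ℝ) : ℝ :=
  A * exp (l₁ * t) + B * exp (l₂ * t)

namespace expCombo

variable {A B l₁ l₂ t : ℝ}

@[simp]
theorem apply_zero : expCombo A B l₁ l₂ 0 = A + B := by
  simp [expCombo]

theorem hasDerivAt :
    HasDerivAt (expCombo A B l₁ l₂) (expCombo (A * l₁) (B * l₂) l₁ l₂ t) t := by
  have hexp (l : ℝ) : HasDerivAt (fun s => exp (l * s)) (exp (l * t) * l) t := by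
    simpa using ((hasDerivAt_id t).const_mul l).exp
  exact (((hexp l₁).const_mul A).add ((hexp l₂).const_mul B)).congr_deriv
    (by simp only [expCombo]; ring)

theorem second_derivative_eq {p c : ℝ} (h₁ : l₁ ^ 2 = p * l₁ + c) (h₂ : l₂ ^ 2 = p * l₂ + c) :
    expCombo (A * l₁ * l₁) (B * l₂ * l₂) l₁ l₂ t =
      p * expCombo (A * l₁) (B * l₂) l₁ l₂ t + c * expCombo A B l₁ l₂ t := by
  simp only [expCombo]
  linear_combination A * exp (l₁ * t) * h₁ + B * exp (l₂ * t) * h₂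

theorem exp_mul_add_le (hl : l₂ ≤ l₁) (hA : 0 ≤ A) (ht : 0 ≤ t) :
    exp (l₂ * t) * (A + B) ≤ expCombo A B l₁ l₂ t := by
  have : exp (l₂ * t) ≤ exp (l₁ * t) := exp_le_exp.mpr (by nlinarith)
  simp only [expCombo]
  nlinarith

end expCombo

theorem hasDerivAt_riccati_of_linear {w w' : ℝ → ℝ} {p q r t : ℝ} (hq : q ≠ 0)
    (hw : HasDerivAt w (w' t) t) (hw' : HasDerivAt w' (p * w' t + q * r * w t) t)
    (hwt : w t ≠ 0) :
    HasDerivAt (fun s => -(w' s / w s) / q)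
      (p * (-(w' t / w t) / q) + q * (-(w' t / w t) / q) ^ 2 - r) t :=
  ((hw'.div hw hwt).neg.div_const q).congr_deriv (by field_simp; ring)

theorem exists_linear_ode_solution_pos {p c m : ℝ} (hc : 0 ≤ c) (hdisc : 0 < p ^ 2 + 4 * c)
    (hm : 0 ≤ m) :
    ∃ w w' : ℝ → ℝ, w 0 = 1 ∧ w' 0 = m ∧ (∀ t, HasDerivAt w (w' t) t) ∧
      (∀ t, HasDerivAt w' (p * w' t + c * w t) t) ∧ ∀ t ≥ 0, 0 < w t ∧ 0 ≤ w' t := by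
  set γ := √(p ^ 2 + 4 * c)
  have hγ2 : γ ^ 2 = p ^ 2 + 4 * c := sq_sqrt hdisc.le
  have hγ : 0 < γ := sqrt_pos.mpr hdisc
  have hγp : |p| ≤ γ := abs_le_sqrt (by nlinarith)
  set l₁ := (p + γ) / 2
  set l₂ := (p - γ) / 2
  have hl₁ : 0 ≤ l₁ := by have := neg_abs_le p; simp only [l₁]; linarith
  have hl₂ : l₂ ≤ 0 := by have := le_abs_self p; simp only [l₂]; linarith
  have hroot₁ : l₁ ^ 2 = p * l₁ + c := by simp only [l₁]; linear_combination hγ2 / 4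
  have hroot₂ : l₂ ^ 2 = p * l₂ + c := by simp only [l₂]; linear_combination hγ2 / 4
  set A := (m - l₂) / γ
  set B := (l₁ - m) / γ
  have hA : 0 ≤ A := div_nonneg (by linarith) hγ.le
  have hAB : A + B = 1 := by simp only [A, B, l₁, l₂]; field_simp; ring
  have hABm : A * l₁ + B * l₂ = m := by simp only [A, B, l₁, l₂]; field_simp; ring
  refine ⟨expCombo A B l₁ l₂, expCombo (A * l₁) (B * l₂) l₁ l₂, by simp [hAB], by simp [hABm],
    fun t => expCombo.hasDerivAt, fun t => ?_, fun t ht => ⟨?_, ?_⟩⟩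
  · exact expCombo.second_derivative_eq hroot₁ hroot₂ ▸ expCombo.hasDerivAt
  · have := expCombo.exp_mul_add_le (B := B) (hl₂.trans hl₁) hA ht
    rw [hAB, mul_one] at this
    exact (exp_pos _).trans_le this
  · have := expCombo.exp_mul_add_le (B := B * l₂) (hl₂.trans hl₁) (mul_nonneg hA hl₁) ht
    rw [hABm] at this
    exact (mul_nonneg (exp_pos _).le hm).trans this

theorem riccati_cir_global_nonpositive_solution
    (κ σ a u : ℝ) (hκ : 0 < κ) (hσ : 0 < σ) (ha : 0 ≤ a) (hu : 0 ≤ u) :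
    ∃ β : ℝ → ℝ, β 0 = -u ∧
      (∀ t ≥ (0:ℝ), HasDerivAt β (-κ * β t + σ ^ 2 / 2 * (β t) ^ 2 - a) t) ∧
      ∀ t ≥ (0:ℝ), β t ≤ 0 := by
  have hq : 0 < σ ^ 2 / 2 := by positivity
  obtain ⟨w, w', hw0, hw'0, hw, hw', hpos⟩ :=
    exists_linear_ode_solution_pos (p := -κ) (c := σ ^ 2 / 2 * a) (m := σ ^ 2 / 2 * u)
      (by positivity) (by nlinarith [mul_nonneg hq.le ha]) (by positivity)
  refine ⟨fun t => -(w' t / w t) / (σ ^ 2 / 2), ?_, fun t ht => ?_, fun t ht => ?_⟩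
  · simp only [hw0, hw'0, div_one]
    field_simp
  · exact hasDerivAt_riccati_of_linear hq.ne' (hw t) (hw' t) (hpos t ht).1.ne'
  · exact div_nonpos_of_nonpos_of_nonneg
      (neg_nonpos.mpr (div_nonneg (hpos t ht).2 (hpos t ht).1.le)) hq.le
end
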